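/- arXiv:math/0209260 — 2 statements merged into one kernel-verified Lean document; each statement's English description precedes it below -/
import Mathlib

section
/- Let N ≥ 1 and let a_1, …, a_N be pairwise distinct real numbers. Then for every (t_1, t_2) ∈ ℝ² and every pair of indices j, l ∈ {1, …, N}, the weighted Poisson bracket with weights w_k = t_1 + a_k t_2 satisfies {F_j, F_l}^w(p,q) = 0 for all (p,q) ∈ ℝ^N × ℝ^N. In particular (taking t = (1,0)) the functions F_1, …, F_N pairwise commute with respect to the standard Poisson bracket on ℝ^{2N}. -/
open Finset

/-- Partial derivative `∂f/∂p_j` of a function on `ℝ^N × ℝ^N`. -/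
noncomputable def pdP {N : ℕ} (f : (Fin N → ℝ) × (Fin N → ℝ) → ℝ) (j : Fin N)
    (x : (Fin N → ℝ) × (Fin N → ℝ)) : ℝ :=
  fderiv ℝ f x (Pi.single j 1, 0)

/-- Partial derivative `∂f/∂q_j` of a function on `ℝ^N × ℝ^N`. -/
noncomputable def pdQ {N : ℕ} (f : (Fin N → ℝ) × (Fin N → ℝ) → ℝ) (j : Fin N)
    (x : (Fin N → ℝ) × (Fin N → ℝ)) : ℝ :=
  fderiv ℝ f x (0, Pi.single j 1)

/-- The weighted Poisson bracket
`{f,g}^w(p,q) = ∑_j w_j (∂f/∂p_j ∂g/∂q_j − ∂f/∂q_j ∂g/∂p_j)` on `ℝ^N × ℝ^N`. -/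
noncomputable def wPoisson {N : ℕ} (w : Fin N → ℝ)
    (f g : (Fin N → ℝ) × (Fin N → ℝ) → ℝ)
    (x : (Fin N → ℝ) × (Fin N → ℝ)) : ℝ :=
  ∑ j, w j * (pdP f j x * pdQ g j x - pdQ f j x * pdP g j x)

/-- The Gaudin function `F_j(p,q) = ∑_{k ≠ j} (p_k q_j − p_j q_k)^2/(a_k − a_j)`. -/
noncomputable def gaudinF (N : ℕ) (a : Fin N → ℝ) (j : Fin N)
    (x : (Fin N → ℝ) × (Fin N → ℝ)) : ℝ :=
  ∑ k ∈ Finset.univ.erase j, (x.1 k * x.2 j - x.1 j * x.2 k) ^ 2 / (a k - a j)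

/-! ### Auxiliary material -/

/-- The key pointwise algebraic identity underlying commutativity of the Gaudin
Hamiltonians. -/
lemma gaudin_key (t₁ t₂ aj al am pj pl pm qj ql qm : ℝ)
    (h1 : am - aj ≠ 0) (h2 : am - al ≠ 0) (h3 : aj - al ≠ 0) :
    ((t₁ + aj * t₂) * ((-(2 * (pm * qj - pj * qm) * qm) / (am - aj)) *
        (-(2 * (pj * ql - pl * qj) * pl) / (aj - al)) -
      (2 * (pm * qj - pj * qm) * pm / (am - aj)) *
        (2 * (pj * ql - pl * qj) * ql / (aj - al)))) +
    ((t₁ + al * t₂) * ((2 * (pl * qj - pj * ql) * qj / (al - aj)) *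
        (2 * (pm * ql - pl * qm) * pm / (am - al)) -
      (-(2 * (pl * qj - pj * ql) * pj) / (al - aj)) *
        (-(2 * (pm * ql - pl * qm) * qm) / (am - al)))) +
    ((t₁ + am * t₂) * ((2 * (pm * qj - pj * qm) * qj / (am - aj)) *
        (-(2 * (pm * ql - pl * qm) * pl) / (am - al)) -
      (-(2 * (pm * qj - pj * qm) * pj) / (am - aj)) *
        (2 * (pm * ql - pl * qm) * ql / (am - al)))) = 0 := by
  have h4 : al - aj ≠ 0 := by intro h; apply h3; linarith [sub_eq_zero.mp h]
  field_simp
  ring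

/-- Projection to the `k`-th `p`-coordinate as a continuous linear map. -/
noncomputable def PK (N : ℕ) (k : Fin N) : ((Fin N → ℝ) × (Fin N → ℝ)) →L[ℝ] ℝ :=
  (ContinuousLinearMap.proj k).comp (ContinuousLinearMap.fst ℝ (Fin N → ℝ) (Fin N → ℝ))

/-- Projection to the `k`-th `q`-coordinate as a continuous linear map. -/
noncomputable def QK (N : ℕ) (k : Fin N) : ((Fin N → ℝ) × (Fin N → ℝ)) →L[ℝ] ℝ :=
  (ContinuousLinearMap.proj k).comp (ContinuousLinearMap.snd ℝ (Fin N → ℝ) (Fin N → ℝ))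

@[simp] lemma PK_apply {N : ℕ} (k : Fin N) (v : (Fin N → ℝ) × (Fin N → ℝ)) :
    PK N k v = v.1 k := rfl

@[simp] lemma QK_apply {N : ℕ} (k : Fin N) (v : (Fin N → ℝ) × (Fin N → ℝ)) :
    QK N k v = v.2 k := rfl

lemma hg_hasFDerivAt {N : ℕ} (j k : Fin N) (x : (Fin N → ℝ) × (Fin N → ℝ)) :
    HasFDerivAt (fun y : (Fin N → ℝ) × (Fin N → ℝ) => y.1 k * y.2 j - y.1 j * y.2 k)
      ((x.1 k • QK N j + x.2 j • PK N k) - (x.1 j • QK N k + x.2 k • PK N j)) x :=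
  ((PK N k).hasFDerivAt.mul (QK N j).hasFDerivAt).sub
    ((PK N j).hasFDerivAt.mul (QK N k).hasFDerivAt)

lemma term_hasFDerivAt {N : ℕ} (a : Fin N → ℝ) (j k : Fin N)
    (x : (Fin N → ℝ) × (Fin N → ℝ)) :
    HasFDerivAt (fun y : (Fin N → ℝ) × (Fin N → ℝ) =>
        (y.1 k * y.2 j - y.1 j * y.2 k) ^ 2 / (a k - a j))
      ((a k - a j)⁻¹ •
        ((x.1 k * x.2 j - x.1 j * x.2 k) •
            ((x.1 k • QK N j + x.2 j • PK N k) - (x.1 j • QK N k + x.2 k • PK N j)) +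
          (x.1 k * x.2 j - x.1 j * x.2 k) •
            ((x.1 k • QK N j + x.2 j • PK N k) - (x.1 j • QK N k + x.2 k • PK N j)))) x := by
  have h := ((hg_hasFDerivAt j k x).mul (hg_hasFDerivAt j k x)).mul_const (a k - a j)⁻¹
  have hfun : (fun y : (Fin N → ℝ) × (Fin N → ℝ) =>
      (y.1 k * y.2 j - y.1 j * y.2 k) ^ 2 / (a k - a j)) =
      fun y => (y.1 k * y.2 j - y.1 j * y.2 k) * (y.1 k * y.2 j - y.1 j * y.2 k) *
        (a k - a j)⁻¹ := by
    funext y; ring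
  rw [hfun]
  exact h

lemma fderiv_gaudin_apply {N : ℕ} (a : Fin N → ℝ) (j : Fin N)
    (x v : (Fin N → ℝ) × (Fin N → ℝ)) :
    fderiv ℝ (gaudinF N a j) x v =
      ∑ k ∈ Finset.univ.erase j, 2 * (x.1 k * x.2 j - x.1 j * x.2 k) *
        (v.1 k * x.2 j + x.1 k * v.2 j - (v.1 j * x.2 k + x.1 j * v.2 k)) / (a k - a j) := by
  rw [show gaudinF N a j = fun y : (Fin N → ℝ) × (Fin N → ℝ) =>
      ∑ k ∈ Finset.univ.erase j, (y.1 k * y.2 j - y.1 j * y.2 k) ^ 2 / (a k - a j) from rfl]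
  rw [fderiv_fun_sum fun k _ => (term_hasFDerivAt a j k x).differentiableAt]
  rw [ContinuousLinearMap.sum_apply]
  refine Finset.sum_congr rfl fun k hk => ?_
  rw [(term_hasFDerivAt a j k x).fderiv]
  simp only [ContinuousLinearMap.smul_apply, ContinuousLinearMap.add_apply,
    ContinuousLinearMap.sub_apply, PK_apply, QK_apply, smul_eq_mul]
  ring

lemma pdP_gaudin_self {N : ℕ} (a : Fin N → ℝ) (j : Fin N) (x : (Fin N → ℝ) × (Fin N → ℝ)) :
    pdP (gaudinF N a j) j x =
      ∑ k ∈ Finset.univ.erase j,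
        -(2 * (x.1 k * x.2 j - x.1 j * x.2 k) * x.2 k) / (a k - a j) := by
  rw [pdP, fderiv_gaudin_apply]
  refine Finset.sum_congr rfl fun k hk => ?_
  have hk' : k ≠ j := Finset.ne_of_mem_erase hk
  simp [Pi.single_apply, hk']

lemma pdQ_gaudin_self {N : ℕ} (a : Fin N → ℝ) (j : Fin N) (x : (Fin N → ℝ) × (Fin N → ℝ)) :
    pdQ (gaudinF N a j) j x =
      ∑ k ∈ Finset.univ.erase j,
        2 * (x.1 k * x.2 j - x.1 j * x.2 k) * x.1 k / (a k - a j) := by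
  rw [pdQ, fderiv_gaudin_apply]
  refine Finset.sum_congr rfl fun k hk => ?_
  have hk' : k ≠ j := Finset.ne_of_mem_erase hk
  simp [Pi.single_apply, hk']

lemma pdP_gaudin_ne {N : ℕ} (a : Fin N → ℝ) (j m : Fin N) (hm : m ≠ j)
    (x : (Fin N → ℝ) × (Fin N → ℝ)) :
    pdP (gaudinF N a j) m x =
      2 * (x.1 m * x.2 j - x.1 j * x.2 m) * x.2 j / (a m - a j) := by
  rw [pdP, fderiv_gaudin_apply]
  rw [Finset.sum_eq_single_of_mem m (Finset.mem_erase.2 ⟨hm, Finset.mem_univ m⟩)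
    (fun b _ hb => by simp [Pi.single_apply, hb, hm])]
  simp [Pi.single_apply, hm]

lemma pdQ_gaudin_ne {N : ℕ} (a : Fin N → ℝ) (j m : Fin N) (hm : m ≠ j)
    (x : (Fin N → ℝ) × (Fin N → ℝ)) :
    pdQ (gaudinF N a j) m x =
      -(2 * (x.1 m * x.2 j - x.1 j * x.2 m) * x.1 j) / (a m - a j) := by
  rw [pdQ, fderiv_gaudin_apply]
  rw [Finset.sum_eq_single_of_mem m (Finset.mem_erase.2 ⟨hm, Finset.mem_univ m⟩)
    (fun b _ hb => by simp [Pi.single_apply, hb, hm])]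
  simp [Pi.single_apply, hm]

theorem stmt2 (N : ℕ) (hN : 1 ≤ N) (a : Fin N → ℝ) (ha : Function.Injective a) :
    (∀ t₁ t₂ : ℝ, ∀ j l : Fin N, ∀ x : (Fin N → ℝ) × (Fin N → ℝ),
        wPoisson (fun k => t₁ + a k * t₂) (gaudinF N a j) (gaudinF N a l) x = 0)
    ∧ (∀ j l : Fin N, ∀ x : (Fin N → ℝ) × (Fin N → ℝ),
        wPoisson (fun _ => (1 : ℝ)) (gaudinF N a j) (gaudinF N a l) x = 0) := by
  have main : ∀ t₁ t₂ : ℝ, ∀ j l : Fin N, ∀ x : (Fin N → ℝ) × (Fin N → ℝ),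
      wPoisson (fun k => t₁ + a k * t₂) (gaudinF N a j) (gaudinF N a l) x = 0 := by
    intro t₁ t₂ j l x
    rcases eq_or_ne j l with rfl | hjl
    · simp only [wPoisson]
      exact Finset.sum_eq_zero fun m _ => by ring
    · simp only [wPoisson]
      set T : Fin N → ℝ := fun m => (t₁ + a m * t₂) *
        (pdP (gaudinF N a j) m x * pdQ (gaudinF N a l) m x -
         pdQ (gaudinF N a j) m x * pdP (gaudinF N a l) m x) with hT
      set U : Fin N → ℝ := fun k => (t₁ + a j * t₂) *
        ((-(2 * (x.1 k * x.2 j - x.1 j * x.2 k) * x.2 k) / (a k - a j)) *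
           (-(2 * (x.1 j * x.2 l - x.1 l * x.2 j) * x.1 l) / (a j - a l)) -
         (2 * (x.1 k * x.2 j - x.1 j * x.2 k) * x.1 k / (a k - a j)) *
           (2 * (x.1 j * x.2 l - x.1 l * x.2 j) * x.2 l / (a j - a l))) with hU
      set V : Fin N → ℝ := fun k => (t₁ + a l * t₂) *
        ((2 * (x.1 l * x.2 j - x.1 j * x.2 l) * x.2 j / (a l - a j)) *
           (2 * (x.1 k * x.2 l - x.1 l * x.2 k) * x.1 k / (a k - a l)) -
         (-(2 * (x.1 l * x.2 j - x.1 j * x.2 l) * x.1 j) / (a l - a j)) *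
           (-(2 * (x.1 k * x.2 l - x.1 l * x.2 k) * x.2 k) / (a k - a l))) with hV
      have hlj : l ∈ Finset.univ.erase j := Finset.mem_erase.2 ⟨Ne.symm hjl, Finset.mem_univ l⟩
      have hjl2 : j ∈ Finset.univ.erase l := Finset.mem_erase.2 ⟨hjl, Finset.mem_univ j⟩
      have hTj : T j = ∑ k ∈ Finset.univ.erase j, U k := by
        simp only [hT, hU]
        rw [pdP_gaudin_self, pdQ_gaudin_self, pdQ_gaudin_ne a l j hjl x,
          pdP_gaudin_ne a l j hjl x]
        rw [Finset.sum_mul, Finset.sum_mul, ← Finset.sum_sub_distrib, Finset.mul_sum]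
      have hTl : T l = ∑ k ∈ Finset.univ.erase l, V k := by
        simp only [hT, hV]
        rw [pdP_gaudin_ne a j l (Ne.symm hjl) x, pdQ_gaudin_ne a j l (Ne.symm hjl) x,
          pdQ_gaudin_self, pdP_gaudin_self]
        rw [Finset.mul_sum, Finset.mul_sum, ← Finset.sum_sub_distrib, Finset.mul_sum]
      have hUl : U l = 0 := by simp only [hU]; ring
      have hVj : V j = 0 := by simp only [hV]; ring
      have hzero : ∀ m ∈ (Finset.univ.erase j).erase l, U m + (V m + T m) = 0 := by
        intro m hm
        have hml : m ≠ l := (Finset.mem_erase.1 hm).1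
        have hmj : m ≠ j := (Finset.mem_erase.1 (Finset.mem_erase.1 hm).2).1
        have d1 : a m - a j ≠ 0 := sub_ne_zero.2 fun h => hmj (ha h)
        have d2 : a m - a l ≠ 0 := sub_ne_zero.2 fun h => hml (ha h)
        have d3 : a j - a l ≠ 0 := sub_ne_zero.2 fun h => hjl (ha h)
        simp only [hT, hU, hV]
        rw [pdP_gaudin_ne a j m hmj x, pdQ_gaudin_ne a j m hmj x,
          pdP_gaudin_ne a l m hml x, pdQ_gaudin_ne a l m hml x]
        have := gaudin_key t₁ t₂ (a j) (a l) (a m) (x.1 j) (x.1 l) (x.1 m)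
          (x.2 j) (x.2 l) (x.2 m) d1 d2 d3
        linarith
      calc ∑ m, T m = T j + ∑ m ∈ Finset.univ.erase j, T m :=
            (Finset.add_sum_erase _ T (Finset.mem_univ j)).symm
        _ = T j + (T l + ∑ m ∈ (Finset.univ.erase j).erase l, T m) := by
            rw [Finset.add_sum_erase _ T hlj]
        _ = (∑ k ∈ Finset.univ.erase j, U k) +
              ((∑ k ∈ Finset.univ.erase l, V k) +
                ∑ m ∈ (Finset.univ.erase j).erase l, T m) := by rw [hTj, hTl]
        _ = (U l + ∑ k ∈ (Finset.univ.erase j).erase l, U k) +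
              ((V j + ∑ k ∈ (Finset.univ.erase j).erase l, V k) +
                ∑ m ∈ (Finset.univ.erase j).erase l, T m) := by
            rw [Finset.add_sum_erase _ U hlj, ← Finset.erase_right_comm,
              Finset.add_sum_erase _ V hjl2]
        _ = ∑ m ∈ (Finset.univ.erase j).erase l, (U m + (V m + T m)) := by
            rw [hUl, hVj, zero_add, zero_add, Finset.sum_add_distrib, Finset.sum_add_distrib]
        _ = 0 := Finset.sum_eq_zero hzero
  refine ⟨main, fun j l x => ?_⟩
  have h := main 1 0 j l x
  have hw : (fun k : Fin N => (1 : ℝ) + a k * 0) = fun _ => (1 : ℝ) := by funext k; ring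
  rwa [hw] at h
end

section
/- Let N ≥ 1, let a_1, …, a_N be pairwise distinct real numbers, and let z_1^0, z_2^0, z_3^0 ∈ ℝ. Define G : ℝ^N × ℝ^N → ℝ by G(p,q) = z_1^0 ∑_{j=1}^N p_j q_j + z_2^0 ∑_{j=1}^N p_j^2 + z_3^0 ∑_{j=1}^N q_j^2. Then for every j ∈ {1, …, N}, the standard Poisson bracket satisfies {F_j, G}(p,q) = 0 for all (p,q) ∈ ℝ^N × ℝ^N. Consequently the N functions F_1, …, F_{N−1}, G pairwise Poisson-commute with respect to the standard Poisson bracket on ℝ^{2N}. -/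
open Finset

/-- The standard Poisson bracket
`{f,g}(p,q) = ∑_j (∂f/∂p_j ∂g/∂q_j − ∂f/∂q_j ∂g/∂p_j)` on `ℝ^N × ℝ^N`. -/
noncomputable def stdPoisson {N : ℕ}
    (f g : (Fin N → ℝ) × (Fin N → ℝ) → ℝ)
    (x : (Fin N → ℝ) × (Fin N → ℝ)) : ℝ :=
  ∑ j, (pdP f j x * pdQ g j x - pdQ f j x * pdP g j x)

/-- `G(p,q) = z₁⁰ ∑ p_j q_j + z₂⁰ ∑ p_j² + z₃⁰ ∑ q_j²`. -/
noncomputable def gaudinG (N : ℕ) (z₁ z₂ z₃ : ℝ)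
    (x : (Fin N → ℝ) × (Fin N → ℝ)) : ℝ :=
  z₁ * ∑ j, x.1 j * x.2 j + z₂ * ∑ j, (x.1 j) ^ 2 + z₃ * ∑ j, (x.2 j) ^ 2

/-
Write `ω_kj = p_k q_j - p_j q_k`, so that `F_j = ∑_k ω_kj² / (a_k - a_j)` and, by the chain rule,
`{F_j, g} = ∑_k 2 ω_kj / (a_k - a_j) · {ω_kj, g}`. The quadratic Hamiltonian `G` generates the
diagonal linear symplectic action of `sl₂` on the pairs `(p_i, q_i)`, which preserves every
pairing `ω_kj`; hence `{ω_kj, G} = 0`. For `j ≠ l`, expanding `{F_j, F_l}` leaves for each `k`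
the product `4 ω_kj ω_kl ω_jl` times the cyclic sum `∑ 1 / ((a_k - a_j) (a_k - a_l))` over
`(k, j, l)`, which vanishes by partial fractions.
-/

open Finset ContinuousLinearMap

namespace Gaudin

variable {N : ℕ}

abbrev PhaseSpace (N : ℕ) := (Fin N → ℝ) × (Fin N → ℝ)

lemma stdPoisson_swap (f g : PhaseSpace N → ℝ) (x : PhaseSpace N) :
    stdPoisson g f x = -stdPoisson f g x := by
  simp only [stdPoisson, ← sum_neg_distrib]
  exact sum_congr rfl fun i _ => by ring

lemma stdPoisson_self (f : PhaseSpace N → ℝ) (x : PhaseSpace N) : stdPoisson f f x = 0 := by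
  linarith [stdPoisson_swap f f x]

lemma apply_eq_sum_single (L : PhaseSpace N →L[ℝ] ℝ) (v : PhaseSpace N) :
    L v = ∑ i, (v.1 i * L (Pi.single i 1, 0) + v.2 i * L (0, Pi.single i 1)) := by
  have hv : v = ∑ i, (v.1 i • ((Pi.single i 1, 0) : PhaseSpace N) + v.2 i • (0, Pi.single i 1)) := by
    ext j <;> simp [Prod.fst_sum, Prod.snd_sum, Pi.single_apply]
  conv_lhs => rw [hv]
  simp only [map_sum, map_add, map_smul, smul_eq_mul]

lemma stdPoisson_eq_fderiv_apply (f g : PhaseSpace N → ℝ) (x : PhaseSpace N) :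
    stdPoisson f g x = fderiv ℝ f x (fun i => pdQ g i x, fun i => -pdP g i x) := by
  rw [apply_eq_sum_single, stdPoisson]
  exact sum_congr rfl fun i _ => by simp only [pdP, pdQ]; ring

lemma hasFDerivAt_fst_apply (k : Fin N) (x : PhaseSpace N) :
    HasFDerivAt (fun y : PhaseSpace N => y.1 k) ((proj k).comp (fst ℝ _ _)) x :=
  ((proj k).comp (fst ℝ (Fin N → ℝ) (Fin N → ℝ))).hasFDerivAt

lemma hasFDerivAt_snd_apply (k : Fin N) (x : PhaseSpace N) :
    HasFDerivAt (fun y : PhaseSpace N => y.2 k) ((proj k).comp (snd ℝ _ _)) x :=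
  ((proj k).comp (snd ℝ (Fin N → ℝ) (Fin N → ℝ))).hasFDerivAt

def cross (k j : Fin N) (x : PhaseSpace N) : ℝ := x.1 k * x.2 j - x.1 j * x.2 k

@[simp] lemma cross_self (j : Fin N) (x : PhaseSpace N) : cross j j x = 0 := sub_self _

/-- `dF_j = ∑_k coeff a j k • d(cross k j)`; at `k = j` both `cross j j` and, via `x / 0 = 0`,
`coeff a j j` vanish, so all sums below may run over the whole of `Fin N`. -/
noncomputable def coeff (a : Fin N → ℝ) (j k : Fin N) (x : PhaseSpace N) : ℝ :=
  2 * cross k j x / (a k - a j)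

@[simp] lemma coeff_self (a : Fin N → ℝ) (j : Fin N) (x : PhaseSpace N) : coeff a j j x = 0 := by
  simp [coeff]

lemma fderiv_gaudinF_apply (a : Fin N → ℝ) (j : Fin N) (x v : PhaseSpace N) :
    fderiv ℝ (gaudinF N a j) x v =
      ∑ k, coeff a j k x * (v.1 k * x.2 j + x.1 k * v.2 j - v.1 j * x.2 k - x.1 j * v.2 k) := by
  have hF : gaudinF N a j = fun y => ∑ k, (a k - a j)⁻¹ * (cross k j y * cross k j y) := by
    funext y
    rw [gaudinF, ← sum_erase_add _ _ (mem_univ j)]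
    simp [cross, div_eq_inv_mul, sq]
  have hcross (k : Fin N) : HasFDerivAt (cross k j) _ x :=
    ((hasFDerivAt_fst_apply k x).fun_mul (hasFDerivAt_snd_apply j x)).fun_sub
      ((hasFDerivAt_fst_apply j x).fun_mul (hasFDerivAt_snd_apply k x))
  rw [hF, (HasFDerivAt.fun_sum fun k _ => ((hcross k).fun_mul (hcross k)).const_mul _).fderiv]
  simp only [coeff, cross, smul_add, _root_.sum_apply, add_apply, smul_apply, sub_apply,
    comp_apply, coe_fst', coe_snd', proj_apply, smul_eq_mul]
  exact sum_congr rfl fun k _ => by ring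

lemma fderiv_gaudinG_apply (z₁ z₂ z₃ : ℝ) (x v : PhaseSpace N) :
    fderiv ℝ (gaudinG N z₁ z₂ z₃) x v = ∑ k,
      ((z₁ * x.2 k + 2 * z₂ * x.1 k) * v.1 k + (z₁ * x.1 k + 2 * z₃ * x.2 k) * v.2 k) := by
  have hG : gaudinG N z₁ z₂ z₃ = fun y => z₁ * ∑ k, y.1 k * y.2 k + z₂ * ∑ k, y.1 k * y.1 k
      + z₃ * ∑ k, y.2 k * y.2 k := by
    funext y
    simp only [gaudinG, sq]
  have hP (k : Fin N) := hasFDerivAt_fst_apply k x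
  have hQ (k : Fin N) := hasFDerivAt_snd_apply k x
  rw [hG, ((((HasFDerivAt.fun_sum fun k _ => (hP k).fun_mul (hQ k)).const_mul z₁).fun_add
      ((HasFDerivAt.fun_sum fun k _ => (hP k).fun_mul (hP k)).const_mul z₂)).fun_add
      ((HasFDerivAt.fun_sum fun k _ => (hQ k).fun_mul (hQ k)).const_mul z₃)).fderiv]
  simp only [add_apply, smul_apply, _root_.sum_apply, comp_apply, coe_fst', coe_snd', proj_apply,
    smul_eq_mul, mul_sum, ← sum_add_distrib]
  exact sum_congr rfl fun k _ => by ring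

lemma pdP_gaudinF (a : Fin N → ℝ) (j i : Fin N) (x : PhaseSpace N) :
    pdP (gaudinF N a j) i x =
      coeff a j i x * x.2 j - if i = j then ∑ k, coeff a j k x * x.2 k else 0 := by
  simp only [pdP, fderiv_gaudinF_apply, Pi.single_apply, ite_mul, one_mul, zero_mul, Pi.zero_apply,
    mul_zero, add_zero, sub_zero, mul_sub, mul_ite, sum_sub_distrib, sum_ite_eq', mem_univ,
    if_true, sum_ite_irrel, sum_const_zero, @eq_comm _ j i]

lemma pdQ_gaudinF (a : Fin N → ℝ) (j i : Fin N) (x : PhaseSpace N) :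
    pdQ (gaudinF N a j) i x =
      (if i = j then ∑ k, coeff a j k x * x.1 k else 0) - coeff a j i x * x.1 j := by
  simp only [pdQ, fderiv_gaudinF_apply, Pi.zero_apply, zero_mul, Pi.single_apply, mul_ite, mul_one,
    mul_zero, zero_add, sub_zero, mul_sub, sum_sub_distrib, sum_ite_irrel, sum_const_zero,
    sum_ite_eq', mem_univ, if_true, @eq_comm _ j i]

lemma pdP_gaudinG (z₁ z₂ z₃ : ℝ) (i : Fin N) (x : PhaseSpace N) :
    pdP (gaudinG N z₁ z₂ z₃) i x = z₁ * x.2 i + 2 * z₂ * x.1 i := by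
  simp only [pdP, fderiv_gaudinG_apply, Pi.single_apply, mul_ite, mul_one, mul_zero, Pi.zero_apply,
    add_zero, sum_ite_eq', mem_univ, if_true]

lemma pdQ_gaudinG (z₁ z₂ z₃ : ℝ) (i : Fin N) (x : PhaseSpace N) :
    pdQ (gaudinG N z₁ z₂ z₃) i x = z₁ * x.1 i + 2 * z₃ * x.2 i := by
  simp only [pdQ, fderiv_gaudinG_apply, Pi.zero_apply, mul_zero, Pi.single_apply, mul_ite, mul_one,
    zero_add, sum_ite_eq', mem_univ, if_true]

theorem stdPoisson_gaudinF_gaudinG (a : Fin N → ℝ) (z₁ z₂ z₃ : ℝ) (j : Fin N) (x : PhaseSpace N) :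
    stdPoisson (gaudinF N a j) (gaudinG N z₁ z₂ z₃) x = 0 := by
  rw [stdPoisson_eq_fderiv_apply, fderiv_gaudinF_apply]
  refine sum_eq_zero fun k _ => ?_
  simp only [pdP_gaudinG, pdQ_gaudinG]
  ring

lemma coeff_cyclic_cancel (a : Fin N → ℝ) (ha : Function.Injective a) {j l : Fin N} (hjl : j ≠ l)
    (k : Fin N) (x : PhaseSpace N) :
    coeff a j l x * (coeff a l k x * cross k j x)
      + coeff a j k x * (coeff a l k x * cross j l x - coeff a l j x * cross k l x) = 0 := by
  rcases eq_or_ne k j with rfl | hkj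
  · simp
  rcases eq_or_ne k l with rfl | hkl
  · simp
  have hd {i i' : Fin N} (h : i ≠ i') : a i - a i' ≠ 0 := sub_ne_zero.2 (ha.ne h)
  have := hd hkj; have := hd hkl; have := hd hjl; have := hd hjl.symm
  simp only [coeff, cross]
  field_simp
  ring

theorem stdPoisson_gaudinF_gaudinF (a : Fin N → ℝ) (ha : Function.Injective a) {j l : Fin N}
    (hjl : j ≠ l) (x : PhaseSpace N) :
    stdPoisson (gaudinF N a j) (gaudinF N a l) x = 0 := by
  have hS : x.2 j * ∑ m, coeff a l m x * x.1 m - x.1 j * ∑ m, coeff a l m x * x.2 m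
      = ∑ m, coeff a l m x * cross m j x := by
    rw [mul_sum, mul_sum, ← sum_sub_distrib]
    exact sum_congr rfl fun m _ => by simp only [cross]; ring
  have hterm (k : Fin N) : coeff a j k x * ((pdQ (gaudinF N a l) k x) * x.2 j
        + x.1 k * -pdP (gaudinF N a l) j x - pdQ (gaudinF N a l) j x * x.2 k
        - x.1 j * -pdP (gaudinF N a l) k x)
      = (if k = l then coeff a j l x * ∑ m, coeff a l m x * cross m j x else 0)
        + coeff a j k x * (coeff a l k x * cross j l x - coeff a l j x * cross k l x) := by
    simp only [pdP_gaudinF, pdQ_gaudinF, if_neg hjl, ← hS]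
    split_ifs with hkl
    · subst hkl; simp only [cross]; ring
    · simp only [cross]; ring
  rw [stdPoisson_eq_fderiv_apply, fderiv_gaudinF_apply, sum_congr rfl fun k _ => hterm k,
    sum_add_distrib, sum_ite_eq', if_pos (mem_univ l), mul_sum, ← sum_add_distrib]
  exact sum_eq_zero fun k _ => coeff_cyclic_cancel a ha hjl k x

end Gaudin

theorem stmt3_general (N : ℕ) (a : Fin N → ℝ) (ha : Function.Injective a)
    (z₁ z₂ z₃ : ℝ) :
    (∀ j : Fin N, ∀ x : (Fin N → ℝ) × (Fin N → ℝ),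
        stdPoisson (gaudinF N a j) (gaudinG N z₁ z₂ z₃) x = 0)
    ∧ (∀ f ∈ insert (gaudinG N z₁ z₂ z₃)
          {f | ∃ j : Fin N, (j : ℕ) < N - 1 ∧ f = gaudinF N a j},
       ∀ g ∈ insert (gaudinG N z₁ z₂ z₃)
          {f | ∃ j : Fin N, (j : ℕ) < N - 1 ∧ f = gaudinF N a j},
       ∀ x : (Fin N → ℝ) × (Fin N → ℝ), stdPoisson f g x = 0) := by
  open Gaudin in
  refine ⟨stdPoisson_gaudinF_gaudinG a z₁ z₂ z₃, ?_⟩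
  rintro f (rfl | ⟨j, -, rfl⟩) g (rfl | ⟨l, -, rfl⟩) x
  · exact stdPoisson_self _ x
  · rw [stdPoisson_swap, stdPoisson_gaudinF_gaudinG, neg_zero]
  · exact stdPoisson_gaudinF_gaudinG a z₁ z₂ z₃ j x
  · rcases eq_or_ne j l with rfl | hjl
    · exact stdPoisson_self _ x
    · exact stdPoisson_gaudinF_gaudinF a ha hjl x

theorem stmt3 (N : ℕ) (hN : 1 ≤ N) (a : Fin N → ℝ) (ha : Function.Injective a)
    (z₁ z₂ z₃ : ℝ) :
    (∀ j : Fin N, ∀ x : (Fin N → ℝ) × (Fin N → ℝ),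
        stdPoisson (gaudinF N a j) (gaudinG N z₁ z₂ z₃) x = 0)
    ∧ (∀ f ∈ insert (gaudinG N z₁ z₂ z₃)
          {f | ∃ j : Fin N, (j : ℕ) < N - 1 ∧ f = gaudinF N a j},
       ∀ g ∈ insert (gaudinG N z₁ z₂ z₃)
          {f | ∃ j : Fin N, (j : ℕ) < N - 1 ∧ f = gaudinF N a j},
       ∀ x : (Fin N → ℝ) × (Fin N → ℝ), stdPoisson f g x = 0) :=
  stmt3_general N a ha z₁ z₂ z₃
end
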